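/- Let N, A, B, C : ℝ → ℝ be continuously differentiable and nowhere vanishing, and let W : ℝ³ → ℝ be differentiable; set V(t,x,y,z) = W(t, y·e^{x}, z·e^{x}) (a potential invariant under the Killing vector ξ¹ = ∂_x − y∂_y − z∂_z). Suppose u : ℝ⁴ → ℝ is twice continuously differentiable and satisfies the Bianchi V Klein–Gordon equation ∂_t(−(ABC/N)e^{2x}∂_t u) + ∂_x((NBC/A)e^{2x}∂_x u) + ∂_y((NAC/B)∂_y u) + ∂_z((NAB/C)∂_z u) = NABC·e^{2x}·V·u at every point. Define Q = ∂_x u − y·∂_y u − z·∂_z u and the Noether current: I^t = −(ABC/N)e^{2x}·(∂_t u)·Q, I^x = (NBC/A)e^{2x}·(∂_x u)·Q − L, I^y = (NAC/B)·(∂_y u)·Q + y·L, I^z = (NAB/C)·(∂_z u)·Q + z·L, where L = (NABC·e^{2x}/2)·(−(∂_t u)²/N² + (∂_x u)²/A² + e^{−2x}(∂_y u)²/B² + e^{−2x}(∂_z u)²/C² + V·u²). Then the conservation law ∂_t I^t + ∂_x I^x + ∂_y I^y + ∂_z I^z = 0 holds at every point. -/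

import Mathlib

/-!
The given current is the Noether current `I^μ = a_μ ∂_μu · Q − ξ^μ 𝓛` of the diagonal quadratic
Lagrangian `𝓛 = ½ (∑ a_μ (∂_μu)² + m u²)` with respect to `ξ = ∂_x − y∂_y − z∂_z`, where
`Q = ξ(u)`. The product rule together with `∂_μ ξ(u) = ∑ ∂_μξ^ν ∂_νu + ξ(∂_μu)` (symmetry of second
derivatives) gives `div I = (div (a ∇u) − m u) Q + defect`, and the first factor vanishes by the
Klein–Gordon equation. The defect only sees how the data change along `ξ`: its flow
`(t, x + s, y e^{−s}, z e^{−s})` multiplies `a_t`, `a_x` and `m` by `e^{2s}` (the potential is a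
function of the flow invariants `t, y e^x, z e^x`), fixes `a_y`, `a_z`, and `div ξ = −2`; with these
values the defect cancels.
-/

noncomputable section

def pd (μ : Fin 4) (f : (Fin 4 → ℝ) → ℝ) (p : Fin 4 → ℝ) : ℝ :=
  fderiv ℝ f p (Pi.single μ 1)

/-- The Klein-Gordon equation on the Bianchi V spacetime
`diag(−N², A², B²e^{2x}, C²e^{2x})` written in divergence form. -/
def KGBianchiV (N A B C : ℝ → ℝ) (V u : (Fin 4 → ℝ) → ℝ) : Prop :=
  ∀ p : Fin 4 → ℝ,
    pd 0 (fun q => -(A (q 0) * B (q 0) * C (q 0) / N (q 0)) * Real.exp (2 * q 1) * pd 0 u q) p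
    + pd 1 (fun q => (N (q 0) * B (q 0) * C (q 0) / A (q 0)) * Real.exp (2 * q 1) * pd 1 u q) p
    + pd 2 (fun q => (N (q 0) * A (q 0) * C (q 0) / B (q 0)) * pd 2 u q) p
    + pd 3 (fun q => (N (q 0) * A (q 0) * B (q 0) / C (q 0)) * pd 3 u q) p
    = N (p 0) * A (p 0) * B (p 0) * C (p 0) * Real.exp (2 * p 1) * V p * u p

open Finset

def lieDeriv (ξ : Fin 4 → (Fin 4 → ℝ) → ℝ) (f : (Fin 4 → ℝ) → ℝ) (p : Fin 4 → ℝ) : ℝ :=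
  ∑ ν, ξ ν p * pd ν f p

def divergence (ξ : Fin 4 → (Fin 4 → ℝ) → ℝ) (p : Fin 4 → ℝ) : ℝ :=
  ∑ ν, pd ν (ξ ν) p

def lagrangian (a : Fin 4 → (Fin 4 → ℝ) → ℝ) (m u : (Fin 4 → ℝ) → ℝ) (q : Fin 4 → ℝ) : ℝ :=
  (∑ μ, a μ q * pd μ u q ^ 2 + m q * u q ^ 2) / 2

def noetherCurrent (a : Fin 4 → (Fin 4 → ℝ) → ℝ) (m : (Fin 4 → ℝ) → ℝ)
    (ξ : Fin 4 → (Fin 4 → ℝ) → ℝ) (u : (Fin 4 → ℝ) → ℝ) (μ : Fin 4) (q : Fin 4 → ℝ) : ℝ :=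
  a μ q * pd μ u q * lieDeriv ξ u q - ξ μ q * lagrangian a m u q

/-- Minus the change of the Lagrangian density `𝓛 dvol` under the flow of `ξ` prolonged to first
jets, evaluated at the jet of `u` at `p`; it vanishes when `ξ` is a symmetry of the Lagrangian. -/
def symmetryDefect (a : Fin 4 → (Fin 4 → ℝ) → ℝ) (m : (Fin 4 → ℝ) → ℝ)
    (ξ : Fin 4 → (Fin 4 → ℝ) → ℝ) (u : (Fin 4 → ℝ) → ℝ) (p : Fin 4 → ℝ) : ℝ :=
  ∑ μ, ∑ ν, a μ p * pd μ (ξ ν) p * pd μ u p * pd ν u p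
    - (∑ μ, lieDeriv ξ (a μ) p * pd μ u p ^ 2 + lieDeriv ξ m p * u p ^ 2) / 2
    - divergence ξ p * lagrangian a m u p

section NoetherIdentity

variable {a ξ : Fin 4 → (Fin 4 → ℝ) → ℝ} {f g m u : (Fin 4 → ℝ) → ℝ} {p : Fin 4 → ℝ}

theorem pd_sub (μ : Fin 4) (hf : DifferentiableAt ℝ f p) (hg : DifferentiableAt ℝ g p) :
    pd μ (fun q => f q - g q) p = pd μ f p - pd μ g p := by
  simp [pd, fderiv_fun_sub hf hg]

theorem pd_mul (μ : Fin 4) (hf : DifferentiableAt ℝ f p) (hg : DifferentiableAt ℝ g p) :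
    pd μ (fun q => f q * g q) p = pd μ f p * g p + f p * pd μ g p := by
  simp [pd, fderiv_fun_mul hf hg]
  ring

theorem pd_sum {ι : Type*} (s : Finset ι) (μ : Fin 4) {F : ι → (Fin 4 → ℝ) → ℝ}
    (hF : ∀ i ∈ s, DifferentiableAt ℝ (F i) p) :
    pd μ (fun q => ∑ i ∈ s, F i q) p = ∑ i ∈ s, pd μ (F i) p := by
  simp [pd, fderiv_fun_sum hF]

theorem ContDiffAt.differentiableAt_pd (hu : ContDiffAt ℝ 2 u p) (ν : Fin 4) :
    DifferentiableAt ℝ (pd ν u) p :=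
  ((hu.fderiv_right (m := 1) le_rfl).differentiableAt one_ne_zero).clm_apply
    (differentiableAt_const _)

theorem pd_pd_comm (hu : ContDiffAt ℝ 2 u p) (μ ν : Fin 4) :
    pd μ (pd ν u) p = pd ν (pd μ u) p := by
  have hdu : DifferentiableAt ℝ (fderiv ℝ u) p :=
    (hu.fderiv_right (m := 1) le_rfl).differentiableAt one_ne_zero
  have hsnd (i j : Fin 4) :
      pd i (pd j u) p = fderiv ℝ (fderiv ℝ u) p (Pi.single i 1) (Pi.single j 1) := by
    rw [pd, show pd j u = fun q => fderiv ℝ u q (Pi.single j 1) from rfl,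
      fderiv_clm_apply hdu (differentiableAt_const _)]
    simp
  rw [hsnd, hsnd]
  exact hu.isSymmSndFDerivAt (by simp) _ _

theorem lieDeriv_eq_fderiv :
    lieDeriv ξ f p = fderiv ℝ f p (fun ν => ξ ν p) := by
  conv_rhs => rw [pi_eq_sum_univ' (fun ν => ξ ν p)]
  simp [lieDeriv, pd]

theorem lieDeriv_eq_of_hasDerivAt_comp {γ : ℝ → Fin 4 → ℝ} {d : ℝ}
    (hγ : HasDerivAt γ (fun ν => ξ ν p) 0) (hγ0 : γ 0 = p) (hf : DifferentiableAt ℝ f p)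
    (hfγ : HasDerivAt (f ∘ γ) d 0) :
    lieDeriv ξ f p = d := by
  subst hγ0
  rw [lieDeriv_eq_fderiv]
  exact (hf.hasFDerivAt.comp_hasDerivAt 0 hγ).unique hfγ

theorem divergence_mul (hξ : ∀ ν, DifferentiableAt ℝ (ξ ν) p) (hf : DifferentiableAt ℝ f p) :
    divergence (fun μ q => ξ μ q * f q) p = divergence ξ p * f p + lieDeriv ξ f p := by
  simp only [divergence, pd_mul _ (hξ _) hf, sum_add_distrib, lieDeriv, sum_mul]

theorem pd_lieDeriv (hξ : ∀ ν, DifferentiableAt ℝ (ξ ν) p) (hu : ContDiffAt ℝ 2 u p) (μ : Fin 4) :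
    pd μ (lieDeriv ξ u) p = ∑ ν, pd μ (ξ ν) p * pd ν u p + lieDeriv ξ (pd μ u) p := by
  rw [show lieDeriv ξ u = fun q => ∑ ν, ξ ν q * pd ν u q from rfl,
    pd_sum (F := fun ν q => ξ ν q * pd ν u q) _ _
      fun ν _ => (hξ ν).mul (hu.differentiableAt_pd ν),
    lieDeriv, ← sum_add_distrib]
  refine sum_congr rfl fun ν _ => ?_
  rw [pd_mul _ (hξ ν) (hu.differentiableAt_pd ν), pd_pd_comm hu]

theorem lieDeriv_lagrangian (ha : ∀ μ, DifferentiableAt ℝ (a μ) p) (hm : DifferentiableAt ℝ m p)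
    (hu : DifferentiableAt ℝ u p) (hdu : ∀ μ, DifferentiableAt ℝ (pd μ u) p) :
    lieDeriv ξ (lagrangian a m u) p =
      (∑ μ, (lieDeriv ξ (a μ) p * pd μ u p ^ 2 + 2 * a μ p * pd μ u p * lieDeriv ξ (pd μ u) p)
        + lieDeriv ξ m p * u p ^ 2 + 2 * m p * u p * lieDeriv ξ u p) / 2 := by
  have hL := ((HasFDerivAt.fun_sum (u := univ) fun μ _ =>
    (ha μ).hasFDerivAt.fun_mul ((hdu μ).hasFDerivAt.pow 2)).fun_add
    (hm.hasFDerivAt.fun_mul (hu.hasFDerivAt.pow 2))).mul_const (2⁻¹ : ℝ)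
  unfold lagrangian
  simp only [div_eq_mul_inv, lieDeriv_eq_fderiv]
  rw [hL.fderiv]
  simp [Fin.sum_univ_four]
  ring

theorem divergence_noetherCurrent (ha : ∀ μ, DifferentiableAt ℝ (a μ) p)
    (hm : DifferentiableAt ℝ m p) (hξ : ∀ ν, DifferentiableAt ℝ (ξ ν) p)
    (hu : ContDiffAt ℝ 2 u p) :
    divergence (noetherCurrent a m ξ u) p =
      (divergence (fun μ q => a μ q * pd μ u q) p - m p * u p) * lieDeriv ξ u p
        + symmetryDefect a m ξ u p := by
  have hu₁ : DifferentiableAt ℝ u p := hu.differentiableAt (by norm_num)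
  have hdu := hu.differentiableAt_pd
  have hflux : ∀ μ, DifferentiableAt ℝ (fun q => a μ q * pd μ u q) p := by fun_prop
  have hQ : DifferentiableAt ℝ (lieDeriv ξ u) p := by unfold lieDeriv; fun_prop
  have hL : DifferentiableAt ℝ (lagrangian a m u) p := by unfold lagrangian; fun_prop
  calc divergence (noetherCurrent a m ξ u) p
      = ∑ μ, (pd μ (fun q => a μ q * pd μ u q) p * lieDeriv ξ u p
          + a μ p * pd μ u p * pd μ (lieDeriv ξ u) p)
        - divergence (fun μ q => ξ μ q * lagrangian a m u q) p := by
        rw [divergence, divergence, ← sum_sub_distrib]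
        refine sum_congr rfl fun μ _ => ?_
        unfold noetherCurrent
        rw [pd_sub _ ((hflux μ).fun_mul hQ) ((hξ μ).fun_mul hL), pd_mul _ (hflux μ) hQ]
    _ = _ := by
        rw [divergence_mul hξ hL, lieDeriv_lagrangian ha hm hu₁ hdu]
        simp only [pd_lieDeriv hξ hu, symmetryDefect, divergence, lieDeriv, Fin.sum_univ_four]
        ring

end NoetherIdentity

section BianchiV

def killingField : Fin 4 → (Fin 4 → ℝ) → ℝ :=
  ![fun _ => 0, fun _ => 1, fun q => -q 2, fun q => -q 3]

def killingFlow (p : Fin 4 → ℝ) (s : ℝ) : Fin 4 → ℝ :=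
  ![p 0, p 1 + s, p 2 * Real.exp (-s), p 3 * Real.exp (-s)]

def killingInvariants (q : Fin 4 → ℝ) : Fin 3 → ℝ :=
  ![q 0, q 2 * Real.exp (q 1), q 3 * Real.exp (q 1)]

/-- The densitized inverse metric `√|g| g^{μμ}` of Bianchi V; `bianchiVMass` is `√|g| V`. -/
def bianchiVCoeff (N A B C : ℝ → ℝ) : Fin 4 → (Fin 4 → ℝ) → ℝ :=
  ![fun q => -(A (q 0) * B (q 0) * C (q 0) / N (q 0)) * Real.exp (2 * q 1),
    fun q => N (q 0) * B (q 0) * C (q 0) / A (q 0) * Real.exp (2 * q 1),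
    fun q => N (q 0) * A (q 0) * C (q 0) / B (q 0),
    fun q => N (q 0) * A (q 0) * B (q 0) / C (q 0)]

def bianchiVMass (N A B C : ℝ → ℝ) (V : (Fin 4 → ℝ) → ℝ) (q : Fin 4 → ℝ) : ℝ :=
  N (q 0) * A (q 0) * B (q 0) * C (q 0) * Real.exp (2 * q 1) * V q

theorem lieDeriv_killingField (f : (Fin 4 → ℝ) → ℝ) (q : Fin 4 → ℝ) :
    lieDeriv killingField f q = pd 1 f q - q 2 * pd 2 f q - q 3 * pd 3 f q := by
  simp [lieDeriv, killingField, Fin.sum_univ_four]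
  ring

theorem differentiable_killingField (ν : Fin 4) : Differentiable ℝ (killingField ν) := by
  fin_cases ν <;> simp [killingField] <;> fun_prop

theorem divergence_killingField (p : Fin 4 → ℝ) : divergence killingField p = -2 := by
  simp [divergence, killingField, pd, Fin.sum_univ_four, (hasFDerivAt_apply _ p).fderiv]
  norm_num

theorem killingFlow_zero (p : Fin 4 → ℝ) : killingFlow p 0 = p := by
  ext i; fin_cases i <;> simp [killingFlow]

theorem hasDerivAt_killingFlow (p : Fin 4 → ℝ) :
    HasDerivAt (killingFlow p) (fun ν => killingField ν p) 0 := by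
  have hdecay (c : ℝ) : HasDerivAt (fun s => c * Real.exp (-s)) (-c) 0 := by
    simpa using (hasDerivAt_neg 0).exp.const_mul c
  rw [hasDerivAt_pi]
  intro i
  fin_cases i
  · exact hasDerivAt_const _ _
  · exact (hasDerivAt_id 0).const_add _
  · exact hdecay _
  · exact hdecay _

theorem killingInvariants_killingFlow (p : Fin 4 → ℝ) (s : ℝ) :
    killingInvariants (killingFlow p s) = killingInvariants p := by
  have h : Real.exp (-s) * Real.exp (p 1 + s) = Real.exp (p 1) := by
    rw [← Real.exp_add]; ring_nf
  ext i; fin_cases i <;> simp [killingInvariants, killingFlow, mul_assoc, h]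

theorem differentiable_killingInvariants : Differentiable ℝ killingInvariants := by
  refine differentiable_pi.2 fun i => ?_
  fin_cases i <;> simp [killingInvariants] <;> fun_prop

theorem lieDeriv_killingField_of_scaling {f : (Fin 4 → ℝ) → ℝ} {p : Fin 4 → ℝ} {k : ℝ}
    (hf : DifferentiableAt ℝ f p) (hscale : ∀ s, f (killingFlow p s) = Real.exp (k * s) * f p) :
    lieDeriv killingField f p = k * f p := by
  refine lieDeriv_eq_of_hasDerivAt_comp (hasDerivAt_killingFlow p) (killingFlow_zero p) hf ?_
  rw [show f ∘ killingFlow p = fun s => Real.exp (k * s) * f p from funext hscale]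
  simpa using ((hasDerivAt_id (0 : ℝ)).const_mul k).exp.mul_const (f p)

theorem differentiableAt_bianchiVCoeff {N A B C : ℝ → ℝ} {p : Fin 4 → ℝ}
    (hN : DifferentiableAt ℝ N (p 0)) (hA : DifferentiableAt ℝ A (p 0))
    (hB : DifferentiableAt ℝ B (p 0)) (hC : DifferentiableAt ℝ C (p 0))
    (hN0 : N (p 0) ≠ 0) (hA0 : A (p 0) ≠ 0) (hB0 : B (p 0) ≠ 0) (hC0 : C (p 0) ≠ 0) (μ : Fin 4) :
    DifferentiableAt ℝ (bianchiVCoeff N A B C μ) p := by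
  fin_cases μ <;> simp only [bianchiVCoeff] <;> simp <;> fun_prop (disch := assumption)

theorem bianchiVCoeff_killingFlow (N A B C : ℝ → ℝ) (p : Fin 4 → ℝ) (s : ℝ) (μ : Fin 4) :
    bianchiVCoeff N A B C μ (killingFlow p s)
      = Real.exp (![2, 2, 0, 0] μ * s) * bianchiVCoeff N A B C μ p := by
  fin_cases μ <;> simp [bianchiVCoeff, killingFlow, mul_add, Real.exp_add] <;> ring

theorem bianchiVMass_killingFlow (N A B C : ℝ → ℝ) {V : (Fin 4 → ℝ) → ℝ} {p : Fin 4 → ℝ}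
    (hV : ∀ s, V (killingFlow p s) = V p) (s : ℝ) :
    bianchiVMass N A B C V (killingFlow p s) = Real.exp (2 * s) * bianchiVMass N A B C V p := by
  simp only [bianchiVMass, hV]
  simp [killingFlow, mul_add, Real.exp_add]
  ring

theorem symmetryDefect_bianchiV_killingField {N A B C : ℝ → ℝ} {V : (Fin 4 → ℝ) → ℝ}
    (u : (Fin 4 → ℝ) → ℝ) {p : Fin 4 → ℝ}
    (ha : ∀ μ, DifferentiableAt ℝ (bianchiVCoeff N A B C μ) p)
    (hm : DifferentiableAt ℝ (bianchiVMass N A B C V) p) (hV : ∀ s, V (killingFlow p s) = V p) :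
    symmetryDefect (bianchiVCoeff N A B C) (bianchiVMass N A B C V) killingField u p = 0 := by
  have hcoeff (μ : Fin 4) := lieDeriv_killingField_of_scaling (ha μ)
    (bianchiVCoeff_killingFlow N A B C p · μ)
  have hmass := lieDeriv_killingField_of_scaling hm (bianchiVMass_killingFlow N A B C hV)
  rw [symmetryDefect, hmass, divergence_killingField]
  simp only [hcoeff, lagrangian]
  simp [Fin.sum_univ_four, killingField, pd, (hasFDerivAt_apply _ p).fderiv]
  ring

theorem bianchiV_lagrangian_eq {N A B C : ℝ → ℝ} (V u : (Fin 4 → ℝ) → ℝ) {q : Fin 4 → ℝ}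
    (hN0 : N (q 0) ≠ 0) (hA0 : A (q 0) ≠ 0) (hB0 : B (q 0) ≠ 0) (hC0 : C (q 0) ≠ 0) :
    lagrangian (bianchiVCoeff N A B C) (bianchiVMass N A B C V) u q
      = (N (q 0) * A (q 0) * B (q 0) * C (q 0) * Real.exp (2 * q 1) / 2) *
        (-(pd 0 u q) ^ 2 / (N (q 0)) ^ 2 + (pd 1 u q) ^ 2 / (A (q 0)) ^ 2
          + Real.exp (-2 * q 1) * (pd 2 u q) ^ 2 / (B (q 0)) ^ 2
          + Real.exp (-2 * q 1) * (pd 3 u q) ^ 2 / (C (q 0)) ^ 2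
          + V q * (u q) ^ 2) := by
  rw [neg_mul, Real.exp_neg]
  simp [lagrangian, bianchiVCoeff, bianchiVMass, Fin.sum_univ_four]
  field_simp

end BianchiV

/-- for a potential `V(t,x,y,z) = W(t, ye^{x}, ze^{x})` invariant under the
Killing vector `ξ¹ = ∂_x − y∂_y − z∂_z` and a solution `u` of the Bianchi V Klein-Gordon
equation, the associated Noether current is conserved:
`∂_t I^t + ∂_x I^x + ∂_y I^y + ∂_z I^z = 0`. -/
theorem bianchiV_noether_conservation
    (N A B C : ℝ → ℝ)
    (hN : ContDiff ℝ 1 N) (hA : ContDiff ℝ 1 A)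
    (hB : ContDiff ℝ 1 B) (hC : ContDiff ℝ 1 C)
    (hN0 : ∀ t, N t ≠ 0) (hA0 : ∀ t, A t ≠ 0)
    (hB0 : ∀ t, B t ≠ 0) (hC0 : ∀ t, C t ≠ 0)
    (W : (Fin 3 → ℝ) → ℝ) (hW : Differentiable ℝ W)
    (V : (Fin 4 → ℝ) → ℝ)
    (hV : V = fun p => W ![p 0, p 2 * Real.exp (p 1), p 3 * Real.exp (p 1)])
    (u : (Fin 4 → ℝ) → ℝ) (hu : ContDiff ℝ 2 u)
    (hKG : KGBianchiV N A B C V u)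
    (Q : (Fin 4 → ℝ) → ℝ)
    (hQ : Q = fun p => pd 1 u p - p 2 * pd 2 u p - p 3 * pd 3 u p)
    (L It Ix Iy Iz : (Fin 4 → ℝ) → ℝ)
    (hL : L = fun p => (N (p 0) * A (p 0) * B (p 0) * C (p 0) * Real.exp (2 * p 1) / 2) *
      (-(pd 0 u p) ^ 2 / (N (p 0)) ^ 2 + (pd 1 u p) ^ 2 / (A (p 0)) ^ 2
        + Real.exp (-2 * p 1) * (pd 2 u p) ^ 2 / (B (p 0)) ^ 2
        + Real.exp (-2 * p 1) * (pd 3 u p) ^ 2 / (C (p 0)) ^ 2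
        + V p * (u p) ^ 2))
    (hIt : It = fun p =>
      -(A (p 0) * B (p 0) * C (p 0) / N (p 0)) * Real.exp (2 * p 1) * pd 0 u p * Q p)
    (hIx : Ix = fun p =>
      (N (p 0) * B (p 0) * C (p 0) / A (p 0)) * Real.exp (2 * p 1) * pd 1 u p * Q p - L p)
    (hIy : Iy = fun p =>
      (N (p 0) * A (p 0) * C (p 0) / B (p 0)) * pd 2 u p * Q p + p 2 * L p)
    (hIz : Iz = fun p =>
      (N (p 0) * A (p 0) * B (p 0) / C (p 0)) * pd 3 u p * Q p + p 3 * L p) :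
    ∀ p : Fin 4 → ℝ, pd 0 It p + pd 1 Ix p + pd 2 Iy p + pd 3 Iz p = 0 := by
  intro p
  have hNd := hN.differentiable one_ne_zero
  have hAd := hA.differentiable one_ne_zero
  have hBd := hB.differentiable one_ne_zero
  have hCd := hC.differentiable one_ne_zero
  have hVd : Differentiable ℝ V := hV ▸ hW.comp differentiable_killingInvariants
  have hVinv (s : ℝ) : V (killingFlow p s) = V p := by
    rw [hV]; exact congrArg W (killingInvariants_killingFlow p s)
  have ha := differentiableAt_bianchiVCoeff (hNd _) (hAd _) (hBd _) (hCd _)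
    (hN0 (p 0)) (hA0 (p 0)) (hB0 (p 0)) (hC0 (p 0))
  have hm : DifferentiableAt ℝ (bianchiVMass N A B C V) p := by unfold bianchiVMass; fun_prop
  have hQ' : Q = lieDeriv killingField u := funext fun q => by rw [hQ, lieDeriv_killingField]
  have hL' : L = lagrangian (bianchiVCoeff N A B C) (bianchiVMass N A B C V) u := funext fun q => by
    rw [hL, bianchiV_lagrangian_eq V u (hN0 (q 0)) (hA0 (q 0)) (hB0 (q 0)) (hC0 (q 0))]
  have hcurrent (μ : Fin 4) : noetherCurrent (bianchiVCoeff N A B C) (bianchiVMass N A B C V)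
      killingField u μ = ![It, Ix, Iy, Iz] μ := by
    funext q
    fin_cases μ <;> simp [noetherCurrent, hIt, hIx, hIy, hIz, hQ', hL', killingField, bianchiVCoeff]
  have hEL : divergence (fun μ q => bianchiVCoeff N A B C μ q * pd μ u q) p
      = bianchiVMass N A B C V p * u p := by
    simpa [divergence, Fin.sum_univ_four, bianchiVCoeff, bianchiVMass] using hKG p
  have h := divergence_noetherCurrent ha hm (fun ν => differentiable_killingField ν p) hu.contDiffAt
  rw [hEL, sub_self, zero_mul, zero_add, symmetryDefect_bianchiV_killingField u ha hm hVinv] at h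
  simpa [divergence, Fin.sum_univ_four, hcurrent] using h
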